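/- Let E be an abelian sheaf on X_τ, G a finite group, and M a left G̲-torsor. The canonical morphism E → E[M], sending a section e ∈ E(U) to the constant morphism M|_U → E|_U with value (the restrictions of) e, is injective and identifies E with the sheaf of G-invariants of E[M]; that is, it induces an isomorphism E ≅ (E[M])^G. -/

import Mathlib

open CategoryTheory Limits Opposite

universe u

variable {C : Type u} [SmallCategory C]

/-- Data exhibiting a sheaf of groups `F` as the constant sheaf `G̲` with value the group
`G`: a sheaf of groups together with compatible homomorphisms `ι : G →* F(U)` which are
locally bijective (the sheafification of the constant presheaf with value `G`). -/
structure ConstantGroupSheaf (J : GrothendieckTopology C) (G : Type u) [Group G] where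
  /-- the underlying presheaf of groups -/
  F : Cᵒᵖ ⥤ GrpCat.{u}
  isSheaf : Presheaf.IsSheaf J (F ⋙ forget GrpCat)
  /-- the canonical map from constants -/
  ι : ∀ U : Cᵒᵖ, G →* F.obj U
  ι_natural : ∀ {U V : Cᵒᵖ} (f : U ⟶ V) (g : G), F.map f (ι U g) = ι V g
  locally_surjective : ∀ (U : C) (σ : F.obj (op U)), ∃ S ∈ J U,
    ∀ ⦃V : C⦄ (f : V ⟶ U), S.arrows f → ∃ g : G, ι (op V) g = F.map f.op σ
  locally_injective : ∀ (U : C) (g g' : G), ι (op U) g = ι (op U) g' →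
    g = g' ∨ (⊥ : Sieve U) ∈ J U

variable {J : GrothendieckTopology C} {G : Type u} [Group G]

/-- A left `G̲`-torsor on the site `(C, J)`: a sheaf of sets with an action of the constant
sheaf of groups `G̲` which is simply transitive on sections wherever these are nonempty and
admits sections locally. -/
structure ConstTorsor (D : ConstantGroupSheaf J G) where
  /-- the underlying sheaf of sets -/
  Y : Cᵒᵖ ⥤ Type u
  isSheaf : Presheaf.IsSheaf J Y
  /-- the action of `G̲` -/
  smul : ∀ U : Cᵒᵖ, D.F.obj U → Y.obj U → Y.obj U
  one_smul : ∀ (U : Cᵒᵖ) (x : Y.obj U), smul U 1 x = x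
  mul_smul : ∀ (U : Cᵒᵖ) (σ τ : D.F.obj U) (x : Y.obj U),
    smul U (σ * τ) x = smul U σ (smul U τ x)
  map_smul : ∀ {U V : Cᵒᵖ} (f : U ⟶ V) (σ : D.F.obj U) (x : Y.obj U),
    Y.map f (smul U σ x) = smul V (D.F.map f σ) (Y.map f x)
  exists_smul_eq : ∀ (U : Cᵒᵖ) (x₁ x₂ : Y.obj U), ∃ σ : D.F.obj U, smul U σ x₁ = x₂
  smul_injective : ∀ (U : Cᵒᵖ) (σ τ : D.F.obj U) (x : Y.obj U),
    smul U σ x = smul U τ x → σ = τ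
  locally_nonempty : ∀ U : C, ∃ S ∈ J U,
    ∀ ⦃V : C⦄ (f : V ⟶ U), S.arrows f → Nonempty (Y.obj (op V))

variable {D : ConstantGroupSheaf J G}

/-- Sections over `U` of the internal hom sheaf `E[M] = Hom(M, E)`: compatible families of
maps `M(V) → E(V)` indexed by `f : V ⟶ U`. -/
def EMsec (M : ConstTorsor D) (T : Cᵒᵖ ⥤ Type u) (U : C) : Type u :=
  { φ : ∀ ⦃V : C⦄, (V ⟶ U) → M.Y.obj (op V) → T.obj (op V) //
    ∀ ⦃V W : C⦄ (f : V ⟶ U) (e : W ⟶ V) (m : M.Y.obj (op V)),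
      φ (e ≫ f) (M.Y.map e.op m) = T.map e.op (φ f m) }

/-- The internal hom sheaf `E[M] : U ↦ Mor(M|_U, E|_U)`. -/
def EM (M : ConstTorsor D) (T : Cᵒᵖ ⥤ Type u) : Cᵒᵖ ⥤ Type u where
  obj U := EMsec M T U.unop
  map {U V} h := TypeCat.ofHom fun φ => ⟨fun W f m => φ.1 (f ≫ h.unop) m, by
    intro W W' f e m
    have := φ.2 (f ≫ h.unop) e m
    simpa [Category.assoc] using this⟩
  map_id U := by
    refine ConcreteCategory.hom_ext _ _ fun φ => ?_
    apply Subtype.ext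
    funext W f m
    change φ.1 (f ≫ (𝟙 U).unop) m = φ.1 f m
    simp
  map_comp {U V W} h h' := by
    refine ConcreteCategory.hom_ext _ _ fun φ => ?_
    apply Subtype.ext
    funext W' f m
    change φ.1 (f ≫ (h ≫ h').unop) m = φ.1 ((f ≫ h'.unop) ≫ h.unop) m
    simp [Category.assoc]

/-- The left `G`-action on the internal hom sheaf `E[M]`, given by
`(g · φ)(m) = φ(g⁻¹ · m)`. -/
def emSmul (M : ConstTorsor D) (T : Cᵒᵖ ⥤ Type u) (g : G) : EM M T ⟶ EM M T where
  app U := TypeCat.ofHom fun φ => ⟨fun V f m => φ.1 f (M.smul (op V) (D.ι (op V) g⁻¹) m), by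
    intro V W f e m
    rw [← φ.2 f e, M.map_smul e.op, D.ι_natural e.op]⟩
  naturality U V h := by
    refine ConcreteCategory.hom_ext _ _ fun φ => ?_
    apply Subtype.ext
    funext W f m
    rfl
/-- The abelian group of sections over `U` of the internal hom sheaf `E[M]`, for an
abelian sheaf `E`: compatible families of maps `M(V) → E(V)`, with pointwise addition. -/
def emAddSubgroup (M : ConstTorsor D) (E : Cᵒᵖ ⥤ AddCommGrpCat.{u}) (U : C) :
    AddSubgroup (∀ (V : C), (V ⟶ U) → M.Y.obj (op V) → E.obj (op V)) where
  carrier := {φ | ∀ (V W : C) (f : V ⟶ U) (e : W ⟶ V) (m : M.Y.obj (op V)),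
    φ W (e ≫ f) (M.Y.map e.op m) = E.map e.op (φ V f m)}
  add_mem' := by
    intro a b ha hb
    intro V W f e m
    simp only [Pi.add_apply]
    rw [ha V W f e m, hb V W f e m, map_add]
  zero_mem' := by
    intro V W f e m
    simp
  neg_mem' := by
    intro a ha V W f e m
    simp only [Pi.neg_apply]
    rw [ha V W f e m, map_neg]

/-- The `G`-action on the sections of `E[M]`, as an additive group homomorphism. -/
def emRepAux (M : ConstTorsor D) (E : Cᵒᵖ ⥤ AddCommGrpCat.{u}) (U : C) (g : G) :
    emAddSubgroup M E U →+ emAddSubgroup M E U where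
  toFun φ := ⟨fun V f m => φ.1 V f (M.smul (op V) (D.ι (op V) g⁻¹) m), by
    intro V W f e m
    rw [← φ.2 V W f e, M.map_smul e.op, D.ι_natural e.op]⟩
  map_zero' := by apply Subtype.ext; funext V f m; rfl
  map_add' φ ψ := by apply Subtype.ext; funext V f m; rfl

/-- The representation of `G` on the sections of `E[M]` over `U`. -/
def emRep (M : ConstTorsor D) (E : Cᵒᵖ ⥤ AddCommGrpCat.{u}) (U : C) :
    Representation ℤ G (emAddSubgroup M E U) where
  toFun g := (emRepAux M E U g).toIntLinearMap
  map_one' := by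
    refine LinearMap.ext fun φ => ?_
    rw [Module.End.one_apply]
    apply Subtype.ext
    funext V f m
    show φ.1 V f (M.smul (op V) (D.ι (op V) (1 : G)⁻¹) m) = φ.1 V f m
    rw [inv_one, map_one, M.one_smul]
  map_mul' g h := by
    refine LinearMap.ext fun φ => ?_
    rw [Module.End.mul_apply]
    apply Subtype.ext
    funext V f m
    show φ.1 V f (M.smul (op V) (D.ι (op V) (g * h)⁻¹) m)
      = φ.1 V f (M.smul (op V) (D.ι (op V) h⁻¹) (M.smul (op V) (D.ι (op V) g⁻¹) m))
    rw [mul_inv_rev, map_mul, M.mul_smul]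

/-- The canonical morphism `E ⟶ E[M]`, sending a section `e` to the constant morphism
with value (the restrictions of) `e`. -/
def emUnit (M : ConstTorsor D) (E : Cᵒᵖ ⥤ AddCommGrpCat.{u}) (U : C) :
    E.obj (op U) → emAddSubgroup M E U :=
  fun e => ⟨fun V f _ => E.map f.op e, by
    intro V W f g m
    show E.map (g ≫ f).op e = E.map g.op (E.map f.op e)
    rw [op_comp, E.map_comp]
    rfl⟩

/-- Separatedness: two sections of a sheaf agreeing on a covering sieve are equal. -/
lemma sheaf_ext {E : Cᵒᵖ ⥤ AddCommGrpCat.{u}} (hE : Presheaf.IsSheaf J (E ⋙ forget AddCommGrpCat))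
    {V : C} (S : Sieve V) (hS : S ∈ J V) {x y : E.obj (op V)}
    (h : ∀ ⦃W : C⦄ (g : W ⟶ V), S.arrows g → E.map g.op x = E.map g.op y) : x = y := by
  have h' := (isSheaf_iff_isSheaf_of_type _ _).1 hE S hS
  exact h'.isSeparatedFor.ext h

/-- A `G`-invariant section of `E[M]` is independent of the point of `M`. -/
lemma emInvariant_indep {D' : ConstantGroupSheaf J G} (M : ConstTorsor D')
    (E : Cᵒᵖ ⥤ AddCommGrpCat.{u}) (hE : Presheaf.IsSheaf J (E ⋙ forget AddCommGrpCat))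
    (U : C) (φ : emAddSubgroup M E U)
    (hφ : ∀ g : G, emRep M E U g φ = φ) {V : C} (f : V ⟶ U)
    (m m' : M.Y.obj (op V)) : φ.1 V f m = φ.1 V f m' := by
  obtain ⟨σ, hσ⟩ := M.exists_smul_eq (op V) m m'
  obtain ⟨S, hS, hloc⟩ := D'.locally_surjective V σ
  refine sheaf_ext hE S hS ?_
  intro W g hg
  obtain ⟨γ, hγ⟩ := hloc g hg
  rw [← φ.2 V W f g m, ← φ.2 V W f g m', ← hσ, M.map_smul, ← hγ]
  have h1 := congrArg (fun ψ : emAddSubgroup M E U => ψ.1 W (g ≫ f) (M.Y.map g.op m)) (hφ γ⁻¹)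
  have h2 : (emRep M E U γ⁻¹ φ).1 W (g ≫ f) (M.Y.map g.op m)
      = φ.1 W (g ≫ f) (M.smul (op W) (D'.ι (op W) γ) (M.Y.map g.op m)) := by
    show φ.1 W (g ≫ f) (M.smul (op W) (D'.ι (op W) γ⁻¹⁻¹) (M.Y.map g.op m)) = _
    rw [inv_inv]
  have h1' : ((emRep M E U γ⁻¹) φ).1 W (g ≫ f) (M.Y.map g.op m)
      = φ.1 W (g ≫ f) (M.Y.map g.op m) := h1
  exact h1'.symm.trans h2

/-- The canonical morphism `E ⟶ E[M]` is injective and identifies `E`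
with the sheaf of `G`-invariants of `E[M]`. -/
theorem emUnit_injective_and_range_eq_invariants
    (Gfin : Finite G)
    (D' : ConstantGroupSheaf J G) (M : ConstTorsor D')
    (E : Cᵒᵖ ⥤ AddCommGrpCat.{u}) (hE : Presheaf.IsSheaf J (E ⋙ forget AddCommGrpCat)) :
    (∀ U : C, Function.Injective (emUnit M E U)) ∧
    (∀ (U : C) (φ : emAddSubgroup M E U),
      (∀ g : G, emRep M E U g φ = φ) ↔ ∃ e : E.obj (op U), emUnit M E U e = φ) := by
  constructor
  · -- injectivity
    intro U e e' h
    obtain ⟨S, hS, hne⟩ := M.locally_nonempty U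
    refine sheaf_ext hE S hS ?_
    intro V f hf
    obtain ⟨m⟩ := hne f hf
    exact congrArg (fun ψ : emAddSubgroup M E U => ψ.1 V f m) h
  · intro U φ
    constructor
    · -- invariant implies in the image
      intro hφ
      obtain ⟨S, hS, hne⟩ := M.locally_nonempty U
      classical
      -- an arbitrary choice of point of M over each arrow in the sieve
      have pt : ∀ ⦃V : C⦄ (f : V ⟶ U), S.arrows f → M.Y.obj (op V) :=
        fun V f hf => Classical.choice (hne f hf)
      -- the family of elements of E to amalgamate
      set x : Presieve.FamilyOfElements (E ⋙ forget AddCommGrpCat) (S : Presieve U) :=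
        fun V f hf => φ.1 V f (pt f hf) with hx
      have hcompat : x.Compatible := by
        rw [Presieve.compatible_iff_sieveCompatible]
        intro V W f g hf
        show φ.1 W (g ≫ f) (pt (g ≫ f) (S.downward_closed hf g))
            = E.map g.op (φ.1 V f (pt f hf))
        rw [← φ.2 V W f g (pt f hf)]
        exact emInvariant_indep M E hE U φ hφ _ _ _
      have hsheaf := (isSheaf_iff_isSheaf_of_type _ _).1 hE S hS
      obtain ⟨e, he, -⟩ := hsheaf x hcompat
      refine ⟨e, ?_⟩
      apply Subtype.ext
      funext V f m
      show E.map f.op e = φ.1 V f m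
      -- compare on the pullback sieve
      refine sheaf_ext hE (S.pullback f) (J.pullback_stable f hS) ?_
      intro W g hg
      have h1 : E.map g.op (E.map f.op e) = x (g ≫ f) hg := by
        have := he (g ≫ f) hg
        rw [← this]
        show E.map g.op (E.map f.op e) = E.map (g ≫ f).op e
        rw [op_comp, E.map_comp]; rfl
      rw [h1, hx]
      show φ.1 W (g ≫ f) _ = E.map g.op (φ.1 V f m)
      rw [← φ.2 V W f g m]
      exact emInvariant_indep M E hE U φ hφ _ _ _
    · -- the image consists of invariants
      rintro ⟨e, rfl⟩ g
      apply Subtype.ext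
      funext V f m
      rfl
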